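/- Let y = m + u with m, u ∈ ℝ^T, let λ > 0 and c > 1, let β ∈ ℝ^p with support S₀ and group support 𝒢₀, and let β̂ ∈ ℝ^p be any minimizer over b ∈ ℝ^p of ‖y − Xb‖_T² + 2λΩ(b). Assume the dual-norm bound |⟨u, Xb⟩|/T ≤ (λ/c) Ω(b) holds for all b ∈ ℝ^p, and that ‖m − Xβ‖_T ≤ (1/2)‖X(β̂ − β)‖_T. Then Δ = β̂ − β belongs to the cone 𝒞(c₀) with c₀ = (c+1)/(c−1), that is, Ω₁(Δ) ≤ c₀ Ω₀(Δ). -/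
import Mathlib


open Finset

noncomputable section

open scoped Classical

/-- ℓ1 norm on ℝ^p. -/
def l1 {p : ℕ} (b : Fin p → ℝ) : ℝ := ∑ i, |b i|

/-- ℓ2 norm on ℝ^p. -/
def l2 {p : ℕ} (b : Fin p → ℝ) : ℝ := Real.sqrt (∑ i, (b i) ^ 2)

/-- `restr b S` keeps the coordinates of `b` on `S` and puts zeros elsewhere. -/
def restr {p : ℕ} (b : Fin p → ℝ) (S : Finset (Fin p)) : Fin p → ℝ :=
  fun i => if i ∈ S then b i else 0

/-- `G` is a partition of `{1,…,p}` into nonempty pairwise disjoint groups. -/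
def IsPartition {p : ℕ} (G : Finset (Finset (Fin p))) : Prop :=
  (∀ g ∈ G, g.Nonempty) ∧ (∀ g ∈ G, ∀ g' ∈ G, g ≠ g' → Disjoint g g') ∧
    (∀ i : Fin p, ∃ g ∈ G, i ∈ g)

/-- The sg-LASSO penalty `Ω(b) = α|b|₁ + (1−α)∑_{G∈𝒢}|b_G|₂`. -/
def sgl {p : ℕ} (α : ℝ) (G : Finset (Finset (Fin p))) (b : Fin p → ℝ) : ℝ :=
  α * l1 b + (1 - α) * ∑ g ∈ G, l2 (restr b g)

/-- Support `S₀ = {j : β_j ≠ 0}` of `β`. -/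
def supp {p : ℕ} (β : Fin p → ℝ) : Finset (Fin p) :=
  Finset.univ.filter (fun j => β j ≠ 0)

/-- Group support `𝒢₀ = {G ∈ 𝒢 : β_G ≠ 0}` of `β`. -/
def gsupp {p : ℕ} (G : Finset (Finset (Fin p))) (β : Fin p → ℝ) :
    Finset (Finset (Fin p)) :=
  G.filter (fun g => restr β g ≠ 0)

/-- `Ω₀(b) = α|b_{S₀}|₁ + (1−α)∑_{G∈𝒢₀}|b_G|₂`. -/
def sgl0 {p : ℕ} (α : ℝ) (G : Finset (Finset (Fin p))) (β b : Fin p → ℝ) : ℝ :=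
  α * l1 (restr b (supp β)) + (1 - α) * ∑ g ∈ gsupp G β, l2 (restr b g)

/-- `Ω₁(b) = α|b_{S₀ᶜ}|₁ + (1−α)∑_{G∈𝒢∖𝒢₀}|b_G|₂`. -/
def sgl1 {p : ℕ} (α : ℝ) (G : Finset (Finset (Fin p))) (β b : Fin p → ℝ) : ℝ :=
  α * l1 (restr b (supp β)ᶜ) + (1 - α) * ∑ g ∈ G \ gsupp G β, l2 (restr b g)

/-- Effective sparsity constant `s_α`, defined via
`√(s_α) = α√|S₀| + (1−α)√|𝒢₀|`. -/
def salpha {p : ℕ} (α : ℝ) (G : Finset (Finset (Fin p))) (β : Fin p → ℝ) : ℝ :=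
  (α * Real.sqrt ((supp β).card) + (1 - α) * Real.sqrt ((gsupp G β).card)) ^ 2

/-- Empirical squared norm `‖v‖_T² = |v|₂²/T`. -/
def normT2 {T : ℕ} (v : Fin T → ℝ) : ℝ := (∑ t, (v t) ^ 2) / T

/-- Empirical norm `‖v‖_T = √(|v|₂²/T)`. -/
def normT {T : ℕ} (v : Fin T → ℝ) : ℝ := Real.sqrt ((∑ t, (v t) ^ 2) / T)

section AuxLemmas

variable {p : ℕ}

lemma restr_add (a b : Fin p → ℝ) (S : Finset (Fin p)) :
    restr (a + b) S = restr a S + restr b S := by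
  funext i; simp only [restr, Pi.add_apply]; split <;> simp

lemma restr_neg (b : Fin p → ℝ) (S : Finset (Fin p)) :
    restr (-b) S = - restr b S := by
  funext i; simp only [restr, Pi.neg_apply]; split <;> simp

lemma l1_add (a b : Fin p → ℝ) : l1 (a + b) ≤ l1 a + l1 b := by
  rw [l1, l1, l1, ← Finset.sum_add_distrib]
  exact Finset.sum_le_sum fun i _ => abs_add_le _ _

lemma l1_neg (b : Fin p → ℝ) : l1 (-b) = l1 b := by
  simp [l1]

lemma l2_zero : l2 (0 : Fin p → ℝ) = 0 := by simp [l2]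

lemma l2_eq_norm (b : Fin p → ℝ) :
    l2 b = ‖(WithLp.equiv 2 (Fin p → ℝ)).symm b‖ := by
  rw [EuclideanSpace.norm_eq]
  simp [l2, sq_abs]

lemma l2_add (a b : Fin p → ℝ) : l2 (a + b) ≤ l2 a + l2 b := by
  simp only [l2_eq_norm]
  exact norm_add_le ((WithLp.equiv 2 (Fin p → ℝ)).symm a)
    ((WithLp.equiv 2 (Fin p → ℝ)).symm b)

lemma l2_neg (b : Fin p → ℝ) : l2 (-b) = l2 b := by
  simp [l2, Pi.neg_apply, neg_sq]

lemma sgl_decomp (α : ℝ) (G : Finset (Finset (Fin p))) (β b : Fin p → ℝ) :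
    sgl α G b = sgl0 α G β b + sgl1 α G β b := by
  unfold sgl sgl0 sgl1
  have h1 : l1 b = l1 (restr b (supp β)) + l1 (restr b (supp β)ᶜ) := by
    unfold l1
    rw [← Finset.sum_add_distrib]
    refine Finset.sum_congr rfl fun i _ => ?_
    by_cases hi : i ∈ supp β <;> simp [restr, hi]
  have h2 : ∑ g ∈ G, l2 (restr b g) =
      ∑ g ∈ gsupp G β, l2 (restr b g) + ∑ g ∈ G \ gsupp G β, l2 (restr b g) := by
    rw [gsupp, ← Finset.filter_not]
    exact (Finset.sum_filter_add_sum_filter_not G _ _).symm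
  rw [h1, h2]; ring

lemma restr_self_compl (β : Fin p → ℝ) : restr β (supp β)ᶜ = 0 := by
  funext i; simp only [restr]
  split
  · next h =>
      have : ¬ β i ≠ 0 := by simpa [supp] using Finset.mem_compl.mp h
      simpa using this
  · rfl

lemma restr_sub_compl (β βhat : Fin p → ℝ) :
    restr (βhat - β) (supp β)ᶜ = restr βhat (supp β)ᶜ := by
  funext i; simp only [restr, Pi.sub_apply]
  split
  · next h =>
      have : ¬ β i ≠ 0 := by simpa [supp] using Finset.mem_compl.mp h
      have hb : β i = 0 := by simpa using this
      rw [hb]; ring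
  · rfl

lemma restr_zero_of_not_gsupp (G : Finset (Finset (Fin p))) (β : Fin p → ℝ)
    {g : Finset (Fin p)} (hg : g ∈ G \ gsupp G β) : restr β g = 0 := by
  rcases Finset.mem_sdiff.mp hg with ⟨hgG, hgn⟩
  by_contra h
  exact hgn (Finset.mem_filter.mpr ⟨hgG, h⟩)

lemma sgl1_shift (α : ℝ) (G : Finset (Finset (Fin p))) (β βhat : Fin p → ℝ) :
    sgl1 α G β (βhat - β) = sgl1 α G β βhat := by
  unfold sgl1
  rw [restr_sub_compl]
  congr 1
  refine congrArg _ (Finset.sum_congr rfl fun g hg => ?_)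
  have h0 := restr_zero_of_not_gsupp G β hg
  have : restr (βhat - β) g = restr βhat g := by
    funext i
    have hi := congrFun h0 i
    simp only [restr, Pi.sub_apply, Pi.zero_apply] at hi ⊢
    split
    · next h => rw [if_pos h] at hi; rw [hi]; ring
    · rfl
  rw [this]

lemma sgl1_self (α : ℝ) (G : Finset (Finset (Fin p))) (β : Fin p → ℝ) :
    sgl1 α G β β = 0 := by
  unfold sgl1
  rw [restr_self_compl]
  have h1 : l1 (0 : Fin p → ℝ) = 0 := by simp [l1]
  have h2 : ∑ g ∈ G \ gsupp G β, l2 (restr β g) = 0 := by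
    refine Finset.sum_eq_zero fun g hg => ?_
    rw [restr_zero_of_not_gsupp G β hg, l2_zero]
  rw [h1, h2]; ring

lemma sgl0_add (α : ℝ) (hα0 : 0 ≤ α) (hα1 : α ≤ 1)
    (G : Finset (Finset (Fin p))) (β a b : Fin p → ℝ) :
    sgl0 α G β (a + b) ≤ sgl0 α G β a + sgl0 α G β b := by
  unfold sgl0
  have h1 : l1 (restr (a + b) (supp β)) ≤
      l1 (restr a (supp β)) + l1 (restr b (supp β)) := by
    rw [restr_add]; exact l1_add _ _
  have h2 : ∑ g ∈ gsupp G β, l2 (restr (a + b) g) ≤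
      ∑ g ∈ gsupp G β, l2 (restr a g) + ∑ g ∈ gsupp G β, l2 (restr b g) := by
    rw [← Finset.sum_add_distrib]
    exact Finset.sum_le_sum fun g _ => by rw [restr_add]; exact l2_add _ _
  nlinarith [mul_le_mul_of_nonneg_left h1 hα0,
    mul_le_mul_of_nonneg_left h2 (by linarith : (0:ℝ) ≤ 1 - α)]

lemma sgl0_neg (α : ℝ) (G : Finset (Finset (Fin p))) (β b : Fin p → ℝ) :
    sgl0 α G β (-b) = sgl0 α G β b := by
  unfold sgl0
  rw [restr_neg, l1_neg]
  congr 1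
  refine congrArg _ (Finset.sum_congr rfl fun g _ => ?_)
  rw [restr_neg, l2_neg]

end AuxLemmas

set_option maxHeartbeats 1000000 in
/-- cone membership. With `y = m+u`, `λ > 0`, `c > 1`, a sg-LASSO
minimizer `β̂`, the dual-norm bound `|⟨u,Xb⟩|/T ≤ (λ/c)Ω(b)` for all `b`, and
`‖m − Xβ‖_T ≤ (1/2)‖X(β̂−β)‖_T`, the error `Δ = β̂ − β` satisfies
`Ω₁(Δ) ≤ c₀ Ω₀(Δ)` with `c₀ = (c+1)/(c−1)`. -/
theorem sgLasso_cone_membership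
    (p T : ℕ) (hp : 1 ≤ p) (hT : 1 ≤ T)
    (α : ℝ) (hα0 : 0 ≤ α) (hα1 : α ≤ 1)
    (G : Finset (Finset (Fin p))) (hG : IsPartition G)
    (X : Matrix (Fin T) (Fin p) ℝ) (m u : Fin T → ℝ)
    (lam c : ℝ) (hlam : 0 < lam) (hc : 1 < c)
    (β βhat : Fin p → ℝ)
    (hmin : ∀ b : Fin p → ℝ,
      normT2 (m + u - X.mulVec βhat) + 2 * lam * sgl α G βhat ≤
        normT2 (m + u - X.mulVec b) + 2 * lam * sgl α G b)
    (hdual : ∀ b : Fin p → ℝ,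
      |∑ t, u t * X.mulVec b t| / T ≤ (lam / c) * sgl α G b)
    (happrox : normT (m - X.mulVec β) ≤ (1 / 2) * normT (X.mulVec (βhat - β))) :
    sgl1 α G β (βhat - β) ≤ ((c + 1) / (c - 1)) * sgl0 α G β (βhat - β) := by
  have hT0 : (0:ℝ) < T := by exact_mod_cast Nat.lt_of_lt_of_le Nat.zero_lt_one hT
  have hc0 : (0:ℝ) < c := lt_trans one_pos hc
  set Δ : Fin p → ℝ := βhat - β with hΔ
  set v : Fin T → ℝ := X.mulVec Δ with hv
  set f : Fin T → ℝ := m - X.mulVec β with hf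
  -- basic inequality at the sum level
  have hrv : ∀ t, (m + u - X.mulVec βhat) t =
      (m + u - X.mulVec β) t - v t := by
    intro t
    simp only [hv, hΔ, Matrix.mulVec_sub, Pi.sub_apply, Pi.add_apply]
    ring
  have hexp : ∑ t, ((m + u - X.mulVec βhat) t)^2 =
      ∑ t, ((m + u - X.mulVec β) t)^2
        - 2 * (∑ t, (m + u - X.mulVec β) t * v t) + ∑ t, (v t)^2 := by
    have e : ∀ t : Fin T, ((m + u - X.mulVec βhat) t)^2 =
        ((m + u - X.mulVec β) t)^2 - 2 * ((m + u - X.mulVec β) t * v t)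
          + (v t)^2 := by
      intro t; rw [hrv t]; ring
    rw [Finset.sum_congr rfl fun t _ => e t]
    rw [Finset.sum_add_distrib, Finset.sum_sub_distrib, ← Finset.mul_sum]
  have H1 := hmin β
  unfold normT2 at H1
  have key : ∀ a b x y : ℝ, a/(T:ℝ) + x ≤ b/(T:ℝ) + y → a + x*T ≤ b + y*T := by
    intro a b x y h
    have h2 := mul_le_mul_of_nonneg_right h hT0.le
    calc a + x*T = (a/T + x)*T := by field_simp
      _ ≤ (b/T + y)*T := h2
      _ = b + y*T := by field_simp
  have H2 := key _ _ _ _ H1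
  rw [hexp] at H2
  -- split the cross term
  have hsplit : ∑ t, (m + u - X.mulVec β) t * v t =
      ∑ t, f t * v t + ∑ t, u t * v t := by
    rw [← Finset.sum_add_distrib]
    refine Finset.sum_congr rfl fun t _ => ?_
    simp only [hf, Pi.sub_apply, Pi.add_apply]
    ring
  -- dual norm bound
  have hA : ∑ t, u t * v t ≤ (lam/c) * sgl α G Δ * T := by
    have h := hdual Δ
    rw [← hv] at h
    have h2 : |∑ t, u t * v t| ≤ (lam/c) * sgl α G Δ * T :=
      (div_le_iff₀ hT0).mp h
    exact le_trans (le_abs_self _) h2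
  -- approximation error bound via Cauchy-Schwarz
  have F0 : (0:ℝ) ≤ ∑ t, (f t)^2 := Finset.sum_nonneg fun t _ => sq_nonneg _
  have Q0 : (0:ℝ) ≤ ∑ t, (v t)^2 := Finset.sum_nonneg fun t _ => sq_nonneg _
  have hsq : Real.sqrt (∑ t, (f t)^2) ≤ (1/2) * Real.sqrt (∑ t, (v t)^2) := by
    have h := happrox
    unfold normT at h
    rw [Real.sqrt_div F0, Real.sqrt_div Q0] at h
    have hsT : (0:ℝ) < Real.sqrt T := Real.sqrt_pos.mpr hT0
    have h2 := mul_le_mul_of_nonneg_right h hsT.le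
    rw [div_mul_cancel₀ _ hsT.ne'] at h2
    calc Real.sqrt (∑ t, (f t)^2) ≤ 1/2 * (Real.sqrt (∑ t, (v t)^2) / Real.sqrt T) * Real.sqrt T := h2
      _ = (1/2) * Real.sqrt (∑ t, (v t)^2) := by
          field_simp
  have hB : ∑ t, f t * v t ≤ (1/2) * ∑ t, (v t)^2 := by
    have hCS : (∑ t, f t * v t) ≤
        Real.sqrt (∑ t, (f t)^2) * Real.sqrt (∑ t, (v t)^2) := by
      calc (∑ t, f t * v t) ≤ |∑ t, f t * v t| := le_abs_self _
        _ = Real.sqrt ((∑ t, f t * v t)^2) := (Real.sqrt_sq_eq_abs _).symm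
        _ ≤ Real.sqrt ((∑ t, (f t)^2) * (∑ t, (v t)^2)) :=
            Real.sqrt_le_sqrt (Finset.sum_mul_sq_le_sq_mul_sq _ _ _)
        _ = Real.sqrt (∑ t, (f t)^2) * Real.sqrt (∑ t, (v t)^2) :=
            Real.sqrt_mul F0 _
    have h2 := mul_le_mul_of_nonneg_right hsq (Real.sqrt_nonneg (∑ t, (v t)^2))
    have h3 : Real.sqrt (∑ t, (v t)^2) * Real.sqrt (∑ t, (v t)^2)
        = ∑ t, (v t)^2 := Real.mul_self_sqrt Q0
    nlinarith [hCS, h2, h3]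
  -- combine: lam * Ω(βhat) ≤ (lam/c) Ω(Δ) + lam Ω(β)
  have HΩ : lam * sgl α G βhat ≤ (lam/c) * sgl α G Δ + lam * sgl α G β := by
    have hlin : (2 * lam * sgl α G βhat) * T ≤
        ((lam/c) * sgl α G Δ * T + lam * sgl α G β * T) * 2 := by
      rw [hsplit] at H2
      nlinarith [H2, hA, hB]
    have := le_of_mul_le_mul_right (by nlinarith [hlin] :
      (lam * sgl α G βhat) * T ≤ ((lam/c) * sgl α G Δ + lam * sgl α G β) * T) hT0
    linarith
  have key2 : c * sgl α G βhat ≤ sgl α G Δ + c * sgl α G β := by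
    have h := mul_le_mul_of_nonneg_left HΩ (show (0:ℝ) ≤ c/lam by positivity)
    have e1 : c/lam * (lam * sgl α G βhat) = c * sgl α G βhat := by
      field_simp
    have e2 : c/lam * ((lam/c) * sgl α G Δ + lam * sgl α G β)
        = sgl α G Δ + c * sgl α G β := by
      field_simp
    rw [e1, e2] at h
    exact h
  -- decompositions
  have d1 : sgl α G βhat = sgl0 α G β βhat + sgl1 α G β Δ := by
    rw [sgl_decomp α G β βhat, hΔ, sgl1_shift]
  have d2 : sgl α G Δ = sgl0 α G β Δ + sgl1 α G β Δ := sgl_decomp α G β Δ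
  have d3 : sgl α G β = sgl0 α G β β := by
    rw [sgl_decomp α G β β, sgl1_self, add_zero]
  rw [d1, d2, d3] at key2
  -- triangle inequality for Ω₀
  have tri : sgl0 α G β β ≤ sgl0 α G β βhat + sgl0 α G β Δ := by
    have hβ : β = βhat + (-Δ) := by
      funext i
      simp only [hΔ, Pi.add_apply, Pi.neg_apply, Pi.sub_apply]
      ring
    calc sgl0 α G β β = sgl0 α G β (βhat + (-Δ)) := by rw [← hβ]
      _ ≤ sgl0 α G β βhat + sgl0 α G β (-Δ) := sgl0_add α hα0 hα1 G β _ _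
      _ = sgl0 α G β βhat + sgl0 α G β Δ := by rw [sgl0_neg]
  have ctri := mul_le_mul_of_nonneg_left tri hc0.le
  have hc1 : (0:ℝ) < c - 1 := by linarith
  rw [div_mul_eq_mul_div, le_div_iff₀ hc1]
  nlinarith [key2, ctri]
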